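/- Let μ, ν be real numbers with μ > 0 and ν > 0. Then ⌊(1/μ)·⌊(ν/μ)·x⌋⌋ ≥ ⌊(ν/μ)·⌊(1/μ)·x⌋⌋ holds for all real x if and only if for all integers m, n it is not the case that ⌊n·ν⌋ < m·μ < ⌈n·ν⌉ (as inequalities of real numbers). Equivalently, the rectangular lattice μℤ × νℤ in ℝ² is disjoint from the enlarged diagonal region D = { (x, y) : ⌊y⌋ < x < ⌈y⌉ }. -/

import Mathlib

/-!
Write `P` for the condition that every lattice point `(mμ, nν)` with `mμ ≤ nν` already satisfies
`mμ ≤ ⌊nν⌋`. Evaluating the commutator at `x = nμ` turns it into `⌊⌊nν⌋/μ⌋ ≥ ⌊nν/μ⌋`, which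
is `P`; conversely, with `p = ⌊x/μ⌋` and `q = ⌊pν/μ⌋`, `P` applied to `(q, p)` gives
`qμ ≤ ⌊pν⌋ ≤ ⌊νx/μ⌋`, which is the commutator inequality at `x`. Finally `P` is equivalent to the
lattice avoiding `D`, since `D` is symmetric under `(x, y) ↦ (-x, -y)` and a point `(s, y)` with
`s ≤ y` lies in `D` exactly when `⌊y⌋ < s`.
-/

def FloorCommutatorNonneg (α β : ℝ) : Prop :=
  ∀ x : ℝ, ⌊α * (⌊β * x⌋ : ℝ)⌋ ≥ ⌊β * (⌊α * x⌋ : ℝ)⌋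

lemma le_floor_of_le_of_not_floor_lt_and_lt_ceil {s y : ℝ} (hsy : s ≤ y)
    (hD : ¬((⌊y⌋ : ℝ) < s ∧ s < ⌈y⌉)) : s ≤ ⌊y⌋ := by
  by_contra! hfloor
  refine hD ⟨hfloor, hsy.trans_lt ?_⟩
  by_contra! hceil
  have : (⌈y⌉ : ℝ) ≤ ⌊y⌋ := by exact_mod_cast Int.le_floor.2 hceil
  linarith [Int.le_ceil y]

lemma not_floor_lt_and_lt_ceil {s y : ℝ} (hle : s ≤ y → s ≤ ⌊y⌋)
    (hge : -s ≤ -y → -s ≤ ⌊-y⌋) : ¬((⌊y⌋ : ℝ) < s ∧ s < ⌈y⌉) := by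
  rintro ⟨hfloor, hceil⟩
  rcases le_total s y with hsy | hys
  · linarith [hle hsy]
  · have := hge (neg_le_neg hys)
    rw [Int.floor_neg, Int.cast_neg] at this
    linarith

section
variable {μ ν : ℝ}

lemma forall_not_floor_lt_and_lt_ceil_iff :
    (∀ m n : ℤ, ¬((⌊(n : ℝ) * ν⌋ : ℝ) < m * μ ∧ (m : ℝ) * μ < ⌈(n : ℝ) * ν⌉)) ↔
      ∀ m n : ℤ, (m : ℝ) * μ ≤ n * ν → (m : ℝ) * μ ≤ ⌊(n : ℝ) * ν⌋ := by
  refine ⟨fun hD m n hmn => le_floor_of_le_of_not_floor_lt_and_lt_ceil hmn (hD m n),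
    fun h m n => not_floor_lt_and_lt_ceil (h m n) ?_⟩
  simpa only [Int.cast_neg, neg_mul] using h (-m) (-n)

lemma le_floor_div_iff (hμ : 0 < μ) {k : ℤ} {y : ℝ} : k ≤ ⌊y / μ⌋ ↔ (k : ℝ) * μ ≤ y := by
  rw [Int.le_floor, le_div_iff₀ hμ]

lemma mul_le_floor_of_floorCommutatorNonneg (hμ : 0 < μ)
    (hcomm : FloorCommutatorNonneg (1 / μ) (ν / μ)) {m n : ℤ} (h : (m : ℝ) * μ ≤ n * ν) :
    (m : ℝ) * μ ≤ ⌊(n : ℝ) * ν⌋ := by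
  have hμ0 := hμ.ne'
  have hcomm_n := hcomm (n * μ)
  rw [show ν / μ * (n * μ) = n * ν by field_simp, show 1 / μ * (n * μ) = n by field_simp,
    Int.floor_intCast, one_div_mul_eq_div, div_mul_eq_mul_div, ge_iff_le] at hcomm_n
  have hmn : m ≤ ⌊ν * n / μ⌋ := (le_floor_div_iff hμ).2 (by rwa [mul_comm ν])
  exact (le_floor_div_iff hμ).1 (hmn.trans hcomm_n)

lemma floorCommutatorNonneg_of_forall_mul_le_floor (hμ : 0 < μ) (hν : 0 ≤ ν)
    (h : ∀ m n : ℤ, (m : ℝ) * μ ≤ n * ν → (m : ℝ) * μ ≤ ⌊(n : ℝ) * ν⌋) :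
    FloorCommutatorNonneg (1 / μ) (ν / μ) := by
  have hμ0 := hμ.ne'
  intro x
  rw [one_div_mul_eq_div, one_div_mul_eq_div, ge_iff_le, le_floor_div_iff hμ]
  set p := ⌊x / μ⌋
  have hpx : (p : ℝ) * μ ≤ x := (le_floor_div_iff hμ).1 le_rfl
  have hqp : (⌊ν / μ * p⌋ : ℝ) * μ ≤ p * ν := by
    rw [div_mul_eq_mul_div, mul_comm ν]
    exact (le_floor_div_iff hμ).1 le_rfl
  have hpνx : (p : ℝ) * ν ≤ ν / μ * x :=
    calc (p : ℝ) * ν = ν / μ * (p * μ) := by field_simp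
      _ ≤ ν / μ * x := by gcongr
  exact (h _ p hqp).trans (by exact_mod_cast Int.floor_le_floor hpνx)

end

/-- Lattice disjointness criterion: for μ, ν > 0, [f_{1/μ}, f_{ν/μ}] ≥ 0 holds iff
the lattice μℤ × νℤ is disjoint from the enlarged diagonal region
D = { (x, y) : ⌊y⌋ < x < ⌈y⌉ }. -/
theorem lattice_disjointness_criterion (μ ν : ℝ) (hμ : 0 < μ) (hν : 0 < ν) :
    (∀ x : ℝ, ⌊(1 / μ) * (⌊(ν / μ) * x⌋ : ℝ)⌋ ≥ ⌊(ν / μ) * (⌊(1 / μ) * x⌋ : ℝ)⌋) ↔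
      ∀ m n : ℤ, ¬ ((⌊(n : ℝ) * ν⌋ : ℝ) < (m : ℝ) * μ ∧
        (m : ℝ) * μ < (⌈(n : ℝ) * ν⌉ : ℝ)) := by
  rw [forall_not_floor_lt_and_lt_ceil_iff]
  exact ⟨fun hcomm _ _ => mul_le_floor_of_floorCommutatorNonneg hμ hcomm,
    floorCommutatorNonneg_of_forall_mul_le_floor hμ hν.le⟩
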